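/- The map U ↦ S(UρU*‖σ) on the unitary group of ℂ^d (σ positive definite) has image equal to the closed interval [H(λ↓(ρ)‖λ↓(σ)), H(λ↓(ρ)‖λ↑(σ))]. -/

import Mathlib

open Matrix ComplexOrder

/-- Classical relative entropy with convention `0 * log 0 = 0` (automatic since
`Real.log 0 = 0`). -/
noncomputable def relEnt {d : ℕ} (p q : Fin d → ℝ) : ℝ :=
  ∑ i, p i * (Real.log (p i) - Real.log (q i))

/-- Non-decreasing rearrangement `p↑`. -/
noncomputable def sortAsc {d : ℕ} (p : Fin d → ℝ) : Fin d → ℝ :=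
  p ∘ Tuple.sort p

/-- Non-increasing rearrangement `p↓`. -/
noncomputable def sortDesc {d : ℕ} (p : Fin d → ℝ) : Fin d → ℝ :=
  (p ∘ Tuple.sort p) ∘ Fin.rev
/-- Matrix logarithm of a Hermitian matrix via its spectral decomposition
(junk value `0` on non-Hermitian matrices). -/
noncomputable def matLog {n : Type*} [Fintype n] [DecidableEq n]
    (A : Matrix n n ℂ) : Matrix n n ℂ :=
  if h : A.IsHermitian then
    (h.eigenvectorUnitary : Matrix n n ℂ) *
      Matrix.diagonal (fun i => (Real.log (h.eigenvalues i) : ℂ)) *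
      (star h.eigenvectorUnitary : Matrix n n ℂ)
  else 0

/-- Eigenvalue vector of a Hermitian matrix (junk value `0` otherwise). -/
noncomputable def evals {n : Type*} [Fintype n] [DecidableEq n]
    (A : Matrix n n ℂ) : n → ℝ :=
  if h : A.IsHermitian then h.eigenvalues else 0

/-- Quantum relative entropy `S(ρ‖σ) = Tr (ρ (log ρ − log σ))`. -/
noncomputable def qRelEnt {n : Type*} [Fintype n] [DecidableEq n]
    (ρ σ : Matrix n n ℂ) : ℝ :=
  ((ρ * (matLog ρ - matLog σ)).trace).re

/-- von Neumann entropy `S(ρ) = −Tr (ρ log ρ)`. -/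
noncomputable def vnEnt {n : Type*} [Fintype n] [DecidableEq n]
    (ρ : Matrix n n ℂ) : ℝ :=
  -((ρ * matLog ρ).trace).re

/-- Partial trace over the second (B) factor. -/
noncomputable def ptraceB {a b : ℕ}
    (ρ : Matrix (Fin a × Fin b) (Fin a × Fin b) ℂ) : Matrix (Fin a) (Fin a) ℂ :=
  fun i j => ∑ k, ρ (i, k) (j, k)

/-- Partial trace over the first (A) factor. -/
noncomputable def ptraceA {a b : ℕ}
    (ρ : Matrix (Fin a × Fin b) (Fin a × Fin b) ℂ) : Matrix (Fin b) (Fin b) ℂ :=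
  fun i j => ∑ k, ρ (k, i) (k, j)

/-- Eigenvalues of a matrix on a bipartite space, reindexed by `Fin (a*b)`. -/
noncomputable def evalsP {a b : ℕ}
    (ρ : Matrix (Fin a × Fin b) (Fin a × Fin b) ℂ) : Fin (a * b) → ℝ :=
  evals ρ ∘ finProdFinEquiv.symm

/-!
Diagonalize `ρ = V diag(p) V*` and `σ = W diag(q) W*`. Then
`S(UρU*‖σ) = ∑ pᵢ log pᵢ - ∑ᵢⱼ pᵢ |Nᵢⱼ|² log qⱼ` with `N = (UV)* W`, and `(|Nᵢⱼ|²)` is doubly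
stochastic. By Birkhoff's theorem the pairing `B ↦ p ⬝ᵥ B (log q)` is extremal on doubly
stochastic matrices at permutation matrices, where the rearrangement inequality bounds it by
`p↓ ⬝ᵥ log q↓` and `p↓ ⬝ᵥ log q↑`; both bounds are attained by permutation matrices. Every
permutation matrix is joined to `1` in the unitary group, so along a path of unitaries between
the two extremal ones every intermediate value is attained.
-/

section RelativeEntropyFormula
variable {n : Type*} [Fintype n] [DecidableEq n]

lemma matLog_eq_conj_diagonal {A : Matrix n n ℂ} (hA : A.IsHermitian) :
    matLog A = Unitary.conjStarAlgAut ℂ _ hA.eigenvectorUnitary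
      (diagonal (RCLike.ofReal ∘ Real.log ∘ hA.eigenvalues)) := by
  rw [matLog, dif_pos hA]
  rfl

lemma matLog_eq_cfc {A : Matrix n n ℂ} (hA : A.IsHermitian) : matLog A = cfc Real.log A := by
  rw [matLog_eq_conj_diagonal hA, hA.cfc_eq]
  rfl

lemma matLog_conjStarAlgAut {A : Matrix n n ℂ} (hA : A.IsHermitian) (U : unitaryGroup n ℂ) :
    matLog (Unitary.conjStarAlgAut ℂ _ U A) = Unitary.conjStarAlgAut ℂ _ U (matLog A) := by
  have hUA : (Unitary.conjStarAlgAut ℂ _ U A).IsHermitian := IsSelfAdjoint.map hA _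
  have hcont : Continuous (Unitary.conjStarAlgAut ℂ (Matrix n n ℂ) U) :=
    show Continuous fun X : Matrix n n ℂ => (U : Matrix n n ℂ) * X * (star U : Matrix n n ℂ) by
      fun_prop
  rw [matLog_eq_cfc hA, matLog_eq_cfc hUA]
  exact (StarAlgHomClass.map_cfc (S := ℂ) _ Real.log A
    (A.finite_real_spectrum.continuousOn _) hcont hA hUA).symm

lemma trace_conj_diagonal_mul_conj_diagonal (V W : unitaryGroup n ℂ) (a b : n → ℝ) :
    (Unitary.conjStarAlgAut ℂ _ V (diagonal (RCLike.ofReal ∘ a)) *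
        Unitary.conjStarAlgAut ℂ _ W (diagonal (RCLike.ofReal ∘ b))).trace =
      ((a ⬝ᵥ (((star V * W : unitaryGroup n ℂ) : Matrix n n ℂ).map Complex.normSq *ᵥ b) : ℝ) :
        ℂ) := by
  set N : Matrix n n ℂ := ((star V * W : unitaryGroup n ℂ) : Matrix n n ℂ)
  calc _ = (diagonal (RCLike.ofReal ∘ a) * (N * diagonal (RCLike.ofReal ∘ b) * star N)).trace := by
        simp only [Unitary.conjStarAlgAut_apply, N, Submonoid.coe_mul, Unitary.coe_star, star_mul,
          star_star, Matrix.mul_assoc]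
        rw [trace_mul_comm]
        simp only [Matrix.mul_assoc]
    _ = _ := by
        simp only [RCLike.ofReal_eq_complex_ofReal, trace, diag, diagonal_mul]
        simp only [mul_apply, diagonal_apply, mul_ite, mul_zero, Finset.sum_ite_eq',
          Finset.mem_univ, if_true, star_apply, dotProduct, mulVec, map_apply, Finset.mul_sum,
          Function.comp_apply]
        push_cast
        simp only [← Complex.mul_conj, Complex.star_def]
        exact Finset.sum_congr rfl fun i _ => Finset.sum_congr rfl fun j _ => by ring

lemma qRelEnt_unitary_conj_eq {ρ σ : Matrix n n ℂ} (hρ : ρ.IsHermitian) (hσ : σ.IsHermitian)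
    (U : unitaryGroup n ℂ) :
    qRelEnt ((U : Matrix n n ℂ) * ρ * (U : Matrix n n ℂ)ᴴ) σ =
      hρ.eigenvalues ⬝ᵥ (Real.log ∘ hρ.eigenvalues) -
        hρ.eigenvalues ⬝ᵥ
          ((((star (U * hρ.eigenvectorUnitary) * hσ.eigenvectorUnitary : unitaryGroup n ℂ) :
            Matrix n n ℂ).map Complex.normSq) *ᵥ (Real.log ∘ hσ.eigenvalues)) := by
  have hconj : (U : Matrix n n ℂ) * ρ * (U : Matrix n n ℂ)ᴴ = Unitary.conjStarAlgAut ℂ _ U ρ := rfl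
  have hρ' : Unitary.conjStarAlgAut ℂ _ U ρ = Unitary.conjStarAlgAut ℂ _
      (U * hρ.eigenvectorUnitary) (diagonal (RCLike.ofReal ∘ hρ.eigenvalues)) := by
    rw [Unitary.conjStarAlgAut_mul_apply, ← hρ.spectral_theorem]
  rw [qRelEnt, hconj, mul_sub, trace_sub, matLog_conjStarAlgAut hρ, matLog_eq_conj_diagonal hρ,
    ← Unitary.conjStarAlgAut_mul_apply, matLog_eq_conj_diagonal hσ, hρ',
    trace_conj_diagonal_mul_conj_diagonal, trace_conj_diagonal_mul_conj_diagonal,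
    Unitary.star_mul_self, Submonoid.coe_one, Matrix.map_one _ (map_zero _) (map_one _),
    one_mulVec]
  norm_cast

end RelativeEntropyFormula

section Birkhoff
variable {n : Type*} [Fintype n] [DecidableEq n]

lemma map_normSq_mem_doublyStochastic (U : unitaryGroup n ℂ) :
    (U : Matrix n n ℂ).map Complex.normSq ∈ doublyStochastic ℝ n := by
  refine mem_doublyStochastic_iff_sum.mpr
    ⟨fun _ _ => Complex.normSq_nonneg _, fun i => ?_, fun j => ?_⟩
  · have h := congrFun₂ (Unitary.coe_mul_star_self U) i i
    simp only [mul_apply, one_apply_eq, Unitary.coe_star, star_apply, Complex.star_def,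
      Complex.mul_conj] at h
    simp only [map_apply]
    exact_mod_cast h
  · have h := congrFun₂ (Unitary.coe_star_mul_self U) j j
    simp only [mul_apply, one_apply_eq, star_apply, Complex.star_def, mul_comm (starRingEnd ℂ _),
      Complex.mul_conj] at h
    simp only [map_apply]
    exact_mod_cast h

def dotProductMulVecLinearMap (p g : n → ℝ) : Matrix n n ℝ →ₗ[ℝ] ℝ where
  toFun B := p ⬝ᵥ (B *ᵥ g)
  map_add' B C := by rw [add_mulVec, dotProduct_add]
  map_smul' r B := by rw [smul_mulVec, dotProduct_smul, RingHom.id_apply]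

lemma dotProduct_mulVec_le_of_mem_doublyStochastic {p g : n → ℝ} {c : ℝ}
    (h : ∀ τ : Equiv.Perm n, p ⬝ᵥ (g ∘ τ) ≤ c) {B : Matrix n n ℝ}
    (hB : B ∈ doublyStochastic ℝ n) : p ⬝ᵥ (B *ᵥ g) ≤ c := by
  rw [← SetLike.mem_coe, doublyStochastic_eq_convexHull_permMatrix] at hB
  obtain ⟨_, ⟨τ, rfl⟩, hle⟩ := ((dotProductMulVecLinearMap p g).convexOn convex_univ)
    |>.exists_ge_of_mem_convexHull (Set.subset_univ _) hB
  exact hle.trans (by simpa [dotProductMulVecLinearMap, permMatrix_mulVec] using h τ)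

lemma le_dotProduct_mulVec_of_mem_doublyStochastic {p g : n → ℝ} {c : ℝ}
    (h : ∀ τ : Equiv.Perm n, c ≤ p ⬝ᵥ (g ∘ τ)) {B : Matrix n n ℝ}
    (hB : B ∈ doublyStochastic ℝ n) : c ≤ p ⬝ᵥ (B *ᵥ g) := by
  rw [← SetLike.mem_coe, doublyStochastic_eq_convexHull_permMatrix] at hB
  obtain ⟨_, ⟨τ, rfl⟩, hle⟩ := ((dotProductMulVecLinearMap p g).concaveOn convex_univ)
    |>.exists_le_of_mem_convexHull (Set.subset_univ _) hB
  exact (by simpa [dotProductMulVecLinearMap, permMatrix_mulVec] using h τ : c ≤ _).trans hle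

end Birkhoff

section Rearrangement
variable {d : ℕ}

lemma sortDesc_eq_comp (p : Fin d → ℝ) : sortDesc p = p ∘ Fin.revPerm.trans (Tuple.sort p) :=
  rfl

lemma sortAsc_eq_comp (p : Fin d → ℝ) : sortAsc p = p ∘ Tuple.sort p := rfl

lemma antitone_sortDesc (p : Fin d → ℝ) : Antitone (sortDesc p) :=
  (Tuple.monotone_sort p).comp_antitone Fin.rev_anti

lemma monotone_sortAsc (p : Fin d → ℝ) : Monotone (sortAsc p) := Tuple.monotone_sort p

lemma dotProduct_comp_perm_eq (p g : Fin d → ℝ) (α β τ : Equiv.Perm (Fin d)) :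
    p ⬝ᵥ (g ∘ τ) = (p ∘ α) ⬝ᵥ ((g ∘ β) ∘ (α.trans (τ.trans β.symm))) := by
  rw [← dotProduct_comp_equiv_symm]
  congr 1
  ext i
  simp

lemma dotProduct_comp_perm_le_sortDesc (p g : Fin d → ℝ) (τ : Equiv.Perm (Fin d)) :
    p ⬝ᵥ (g ∘ τ) ≤ sortDesc p ⬝ᵥ sortDesc g := by
  rw [dotProduct_comp_perm_eq p g _ _ τ, ← sortDesc_eq_comp, ← sortDesc_eq_comp]
  exact ((antitone_sortDesc p).monovary (antitone_sortDesc g)).sum_mul_comp_perm_le_sum_mul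

lemma sortDesc_dotProduct_sortAsc_le (p g : Fin d → ℝ) (τ : Equiv.Perm (Fin d)) :
    sortDesc p ⬝ᵥ sortAsc g ≤ p ⬝ᵥ (g ∘ τ) := by
  rw [dotProduct_comp_perm_eq p g _ (Tuple.sort g) τ, ← sortDesc_eq_comp, ← sortAsc_eq_comp]
  exact ((antitone_sortDesc p).antivary (monotone_sortAsc g)).sum_mul_le_sum_mul_comp_perm

lemma exists_perm_dotProduct_comp_eq (p g : Fin d → ℝ) (α β : Equiv.Perm (Fin d)) :
    ∃ τ : Equiv.Perm (Fin d), p ⬝ᵥ (g ∘ τ) = (p ∘ α) ⬝ᵥ (g ∘ β) := by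
  refine ⟨α.symm.trans β, ?_⟩
  rw [dotProduct_comp_perm_eq p g α β]
  congr 1
  ext i
  simp

lemma sortAsc_comp_of_monotoneOn {f : ℝ → ℝ} {q : Fin d → ℝ} (hf : MonotoneOn f (Set.range q)) :
    sortAsc (f ∘ q) = f ∘ sortAsc q :=
  (Tuple.comp_sort_eq_comp_iff_monotone.mpr fun _ _ hij =>
    hf (Set.mem_range_self _) (Set.mem_range_self _) (monotone_sortAsc q hij)).symm

lemma sortDesc_comp_of_monotoneOn {f : ℝ → ℝ} {q : Fin d → ℝ}
    (hf : MonotoneOn f (Set.range q)) : sortDesc (f ∘ q) = f ∘ sortDesc q :=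
  congrArg (· ∘ Fin.rev) (sortAsc_comp_of_monotoneOn hf)

lemma relEnt_sortDesc (p r : Fin d → ℝ) :
    relEnt (sortDesc p) r = p ⬝ᵥ (Real.log ∘ p) - sortDesc p ⬝ᵥ (Real.log ∘ r) := by
  have hself : sortDesc p ⬝ᵥ (Real.log ∘ sortDesc p) = p ⬝ᵥ (Real.log ∘ p) := by
    rw [sortDesc_eq_comp, ← dotProduct_comp_equiv_symm]
    simp [Function.comp_def]
  rw [← hself, relEnt, ← dotProduct_sub]
  rfl

end Rearrangement

section Connectedness
variable {A : Type*} [Ring A] [StarRing A] [Algebra ℂ A] [StarModule ℂ A]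

/-- For `z = exp (iθ)` this is `exp (iθ (1 - u) / 2)`, as `(1 - u) / 2` is a projection. -/
lemma Unitary.smul_one_add_smul_mem {u : unitary A} (hu : IsSelfAdjoint (u : A)) {z : ℂ}
    (hz : star z * z = 1) :
    ((1 + z) / 2) • (1 : A) + ((1 - z) / 2) • (u : A) ∈ unitary A := by
  have hz' : z * star z = 1 := by rw [mul_comm, hz]
  have hu2 : (u : A) * u = 1 := by
    conv_lhs => arg 1; rw [← hu.star_eq]
    exact Unitary.coe_star_mul_self u
  rw [Unitary.mem_iff]
  simp only [star_add, star_smul, star_one, hu.star_eq, add_mul, mul_add, smul_mul_smul, one_mul,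
    mul_one, hu2, star_div₀, star_sub, star_ofNat]
  constructor
  · linear_combination (norm := module) (hz / 2) • (1 - (u : A))
  · linear_combination (norm := module) (hz' / 2) • (1 - (u : A))

lemma Unitary.joined_one_of_isSelfAdjoint [TopologicalSpace A] [ContinuousAdd A]
    [ContinuousSMul ℂ A] {u : unitary A} (hu : IsSelfAdjoint (u : A)) : Joined 1 u := by
  have hz (t : ℝ) : star (Circle.exp (Real.pi * t) : ℂ) * Circle.exp (Real.pi * t) = 1 := by
    rw [Complex.star_def, ← Complex.normSq_eq_conj_mul_self, Circle.normSq_coe, Complex.ofReal_one]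
  refine ⟨{ toFun := fun t => ⟨_, Unitary.smul_one_add_smul_mem hu (hz t)⟩
            continuous_toFun := by fun_prop
            source' := ?_
            target' := ?_ }⟩
  · ext; simp
  · ext; simp

variable {n : Type*} [Fintype n] [DecidableEq n]

def permUnitary (τ : Equiv.Perm n) : unitaryGroup n ℂ :=
  ⟨τ.permMatrix ℂ, by
    rw [mem_unitaryGroup_iff, star_eq_conjTranspose, conjTranspose_permMatrix, ← permMatrix_mul,
      inv_mul_cancel, permMatrix_one]⟩

@[simp]
lemma coe_permUnitary (τ : Equiv.Perm n) : (permUnitary τ : Matrix n n ℂ) = τ.permMatrix ℂ := rfl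

lemma permUnitary_one : permUnitary (1 : Equiv.Perm n) = 1 := Subtype.ext permMatrix_one

lemma permUnitary_mul (σ τ : Equiv.Perm n) :
    permUnitary (σ * τ) = permUnitary τ * permUnitary σ := Subtype.ext (permMatrix_mul σ τ)

lemma joined_one_permUnitary (τ : Equiv.Perm n) : Joined 1 (permUnitary τ) := by
  induction τ using Equiv.Perm.swap_induction_on with
  | one => rw [permUnitary_one]
  | swap_mul f x y _ ih =>
    have hswap : IsSelfAdjoint (permUnitary (Equiv.swap x y) : Matrix n n ℂ) := by
      rw [coe_permUnitary, IsSelfAdjoint, star_eq_conjTranspose, conjTranspose_permMatrix,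
        Equiv.swap_inv]
    rw [permUnitary_mul, ← mul_one 1]
    exact ih.mul (Unitary.joined_one_of_isSelfAdjoint hswap)

lemma range_eq_Icc_of_joined {X : Type*} [TopologicalSpace X] {f : X → ℝ} (hf : Continuous f)
    {a b : X} (hab : Joined a b) (ha : ∀ x, f a ≤ f x) (hb : ∀ x, f x ≤ f b) :
    Set.range f = Set.Icc (f a) (f b) := by
  refine subset_antisymm (Set.range_subset_iff.2 fun x => ⟨ha x, hb x⟩) ?_
  refine ((isPreconnected_range (hf.comp hab.somePath.continuous)).Icc_subset
    ⟨0, ?_⟩ ⟨1, ?_⟩).trans (Set.range_comp_subset_range _ _) <;> simp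

end Connectedness

lemma map_normSq_permMatrix {n : Type*} [DecidableEq n] (τ : Equiv.Perm n) :
    (τ.permMatrix ℂ).map Complex.normSq = τ.permMatrix ℝ := by
  ext i j
  simp [Equiv.Perm.permMatrix, PEquiv.toMatrix_apply, apply_ite]

lemma range_dotProduct_map_normSq_mulVec {d : ℕ} (p g : Fin d → ℝ) :
    Set.range (fun U : unitaryGroup (Fin d) ℂ =>
        p ⬝ᵥ ((U : Matrix (Fin d) (Fin d) ℂ).map Complex.normSq *ᵥ g)) =
      Set.Icc (sortDesc p ⬝ᵥ sortAsc g) (sortDesc p ⬝ᵥ sortDesc g) := by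
  have hperm (τ : Equiv.Perm (Fin d)) :
      p ⬝ᵥ ((permUnitary τ : Matrix (Fin d) (Fin d) ℂ).map Complex.normSq *ᵥ g) =
        p ⬝ᵥ (g ∘ τ) := by
    rw [coe_permUnitary, map_normSq_permMatrix, permMatrix_mulVec]
  obtain ⟨τmin, hmin⟩ := exists_perm_dotProduct_comp_eq p g (Fin.revPerm.trans (Tuple.sort p))
    (Tuple.sort g)
  obtain ⟨τmax, hmax⟩ := exists_perm_dotProduct_comp_eq p g (Fin.revPerm.trans (Tuple.sort p))
    (Fin.revPerm.trans (Tuple.sort g))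
  rw [← sortDesc_eq_comp, ← sortAsc_eq_comp, ← hperm] at hmin
  rw [← sortDesc_eq_comp, ← sortDesc_eq_comp, ← hperm] at hmax
  rw [← hmin, ← hmax]
  refine range_eq_Icc_of_joined (by fun_prop)
    ((joined_one_permUnitary τmin).symm.trans (joined_one_permUnitary τmax))
    (fun U => ?_) (fun U => ?_)
  · exact hmin ▸ le_dotProduct_mulVec_of_mem_doublyStochastic
      (sortDesc_dotProduct_sortAsc_le p g) (map_normSq_mem_doublyStochastic U)
  · exact hmax ▸ dotProduct_mulVec_le_of_mem_doublyStochastic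
      (dotProduct_comp_perm_le_sortDesc p g) (map_normSq_mem_doublyStochastic U)

theorem stmt_19_general {d : ℕ} (ρ σ : Matrix (Fin d) (Fin d) ℂ)
    (hρ : ρ.PosSemidef)
    (hσ : σ.PosDef) :
    Set.range (fun U : Matrix.unitaryGroup (Fin d) ℂ =>
        qRelEnt ((U : Matrix (Fin d) (Fin d) ℂ) * ρ *
          ((U : Matrix (Fin d) (Fin d) ℂ))ᴴ) σ) =
      Set.Icc (relEnt (sortDesc (evals ρ)) (sortDesc (evals σ)))
        (relEnt (sortDesc (evals ρ)) (sortAsc (evals σ))) := by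
  set p := hρ.1.eigenvalues
  set q := hσ.1.eigenvalues
  set V := hρ.1.eigenvectorUnitary
  set W := hσ.1.eigenvectorUnitary
  have hlog : MonotoneOn Real.log (Set.range q) := by
    rintro _ ⟨i, rfl⟩ _ ⟨_, rfl⟩
    exact Real.log_le_log (hσ.eigenvalues_pos i)
  have hsurj : Function.Surjective fun U : unitaryGroup (Fin d) ℂ => star (U * V) * W :=
    fun N => ⟨W * star N * star V, by simp only [Unitary.star_eq_inv]; group⟩
  have hF : (fun U : unitaryGroup (Fin d) ℂ => qRelEnt ((U : Matrix (Fin d) (Fin d) ℂ) * ρ *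
      ((U : Matrix (Fin d) (Fin d) ℂ))ᴴ) σ) = (fun x => p ⬝ᵥ (Real.log ∘ p) - x) ∘
      (fun N : unitaryGroup (Fin d) ℂ =>
        p ⬝ᵥ ((N : Matrix (Fin d) (Fin d) ℂ).map Complex.normSq *ᵥ (Real.log ∘ q))) ∘
      (fun U => star (U * V) * W) :=
    funext (qRelEnt_unitary_conj_eq hρ.1 hσ.1)
  rw [hF, Set.range_comp, hsurj.range_comp, range_dotProduct_map_normSq_mulVec,
    Set.image_const_sub_Icc, sortDesc_comp_of_monotoneOn hlog, sortAsc_comp_of_monotoneOn hlog,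
    evals, dif_pos hρ.1, evals, dif_pos hσ.1, relEnt_sortDesc, relEnt_sortDesc]

theorem stmt_19 {d : ℕ} (ρ σ : Matrix (Fin d) (Fin d) ℂ)
    (hρ : ρ.PosSemidef) (hρ1 : ρ.trace = 1)
    (hσ : σ.PosDef) (hσ1 : σ.trace = 1) :
    Set.range (fun U : Matrix.unitaryGroup (Fin d) ℂ =>
        qRelEnt ((U : Matrix (Fin d) (Fin d) ℂ) * ρ *
          ((U : Matrix (Fin d) (Fin d) ℂ))ᴴ) σ) =
      Set.Icc (relEnt (sortDesc (evals ρ)) (sortDesc (evals σ)))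
        (relEnt (sortDesc (evals ρ)) (sortAsc (evals σ))) :=
  stmt_19_general ρ σ hρ hσ
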